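/- Let A, B be distinct points and let C, D, E be points such that D and E both lie in the open segment AB (with A, D, E, B in this order on the line) and C is off the line AB. If the five points {A, B, C, D, E} determine at most three distinct angle values α < β < γ in (0,π), then β = 2α, γ = 3α, and α = π/5 (so the angles are π/5, 2π/5, 3π/5). -/

import Mathlib

open EuclideanGeometry

noncomputable section

abbrev Pt : Type := EuclideanSpace ℝ (Fin 2)

/-- The point (x, y) in the Euclidean plane. -/
def pt (x y : ℝ) : Pt := (WithLp.equiv 2 (Fin 2 → ℝ)).symm ![x, y]

/-- The set of distinct angle values in (0, π) determined by a planar point set. -/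
def angleSet (P : Set Pt) : Set ℝ :=
  {θ : ℝ | θ ∈ Set.Ioo 0 Real.pi ∧
    ∃ x ∈ P, ∃ y ∈ P, ∃ z ∈ P, x ≠ y ∧ y ≠ z ∧ x ≠ z ∧ ∠ x y z = θ}

/-!
The angles `∠ACD < ∠ACE < ∠ACB` at the apex must be `α < β < γ`. Their differences `∠DCE = β - α`
and `∠DCB = γ - α` are again angles of the configuration, which forces `β = 2α` and `γ = 3α`.
By the exterior angle theorem `∠CEB = ∠CAB + β` and `∠CDA = ∠CBA + β` both exceed `β`, so both are
`γ`, whence the base angles `∠CAB` and `∠CBA` equal `α`; the angle sum of `ABC` gives `5α = π`.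
-/

section Segment

variable {R V : Type*} [Field R] [LinearOrder R] [IsStrictOrderedRing R] [AddCommGroup V]
  [Module R V]

lemma sbtw_of_mem_openSegment {x y z : V} (h : y ∈ openSegment R x z) (hxz : x ≠ z) :
    Sbtw R x y z :=
  sbtw_iff_mem_image_Ioo_and_ne.2 ⟨openSegment_eq_image_lineMap R x z ▸ h, hxz⟩

lemma sbtw_of_mem_openSegment_of_mem_openSegment {a b d e : V} (hab : a ≠ b)
    (hd : d ∈ openSegment R a e) (he : e ∈ openSegment R d b) :
    Sbtw R a d e ∧ Sbtw R d e b := by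
  have hae : a ≠ e := by
    rintro rfl
    rw [openSegment_same, Set.mem_singleton_iff] at hd
    subst hd
    exact hab (left_mem_openSegment_iff.1 he)
  have hdb : d ≠ b := by
    rintro rfl
    rw [openSegment_same, Set.mem_singleton_iff] at he
    subst he
    exact hab (right_mem_openSegment_iff.1 hd)
  exact ⟨sbtw_of_mem_openSegment hd hae, sbtw_of_mem_openSegment he hdb⟩

end Segment

lemma not_collinear_of_notMem_affineSpan_pair {k V P : Type*} [DivisionRing k] [AddCommGroup V]
    [Module k V] [AddTorsor V P] {a b c x y : P} (hc : c ∉ line[k, a, b])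
    (hx : x ∈ line[k, a, b]) (hy : y ∈ line[k, a, b]) (hxy : x ≠ y) :
    ¬Collinear k ({x, c, y} : Set P) := fun hcol =>
  hc <| affineSpan_pair_le_of_mem_of_mem hx hy <|
    hcol.mem_affineSpan_of_mem_of_ne (by simp) (by simp) (by simp) hxy

lemma angle_mem_angleSet {P : Set Pt} {x y z : Pt} (hx : x ∈ P) (hy : y ∈ P) (hz : z ∈ P)
    (h : ¬Collinear ℝ ({x, y, z} : Set Pt)) : ∠ x y z ∈ angleSet P :=
  ⟨⟨angle_pos_of_not_collinear h, angle_lt_pi_of_not_collinear h⟩, x, hx, y, hy, z, hz,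
    ne₁₂_of_not_collinear h, ne₂₃_of_not_collinear h, ne₁₃_of_not_collinear h, rfl⟩

structure TwoCevians {V P : Type*} [AddCommGroup V] [Module ℝ V] [AddTorsor V P]
    (A B C D E : P) : Prop where
  sbtw_ADE : Sbtw ℝ A D E
  sbtw_DEB : Sbtw ℝ D E B
  not_collinear : ¬Collinear ℝ ({A, B, C} : Set P)

namespace TwoCevians

lemma of_mem_openSegment {V : Type*} [AddCommGroup V] [Module ℝ V] {A B C D E : V}
    (hC : ¬Collinear ℝ ({A, B, C} : Set V)) (hD : D ∈ openSegment ℝ A E)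
    (hE : E ∈ openSegment ℝ D B) : TwoCevians A B C D E :=
  have h := sbtw_of_mem_openSegment_of_mem_openSegment (ne₁₂_of_not_collinear hC) hD hE
  ⟨h.1, h.2, hC⟩

section Affine

variable {V P : Type*} [AddCommGroup V] [Module ℝ V] [AddTorsor V P] {A B C D E : P}

variable (h : TwoCevians A B C D E)
include h

lemma sbtw_ADB : Sbtw ℝ A D B := h.sbtw_ADE.trans_expand_left h.sbtw_DEB

lemma sbtw_AEB : Sbtw ℝ A E B := h.sbtw_ADE.trans_expand_right h.sbtw_DEB

lemma mem_line {X : P} (hX : X ∈ ({A, B, D, E} : Set P)) : X ∈ line[ℝ, A, B] := by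
  rcases hX with rfl | rfl | rfl | rfl
  · exact left_mem_affineSpan_pair ℝ _ _
  · exact right_mem_affineSpan_pair ℝ _ _
  · exact h.sbtw_ADB.wbtw.mem_affineSpan
  · exact h.sbtw_AEB.wbtw.mem_affineSpan

lemma not_collinear_apex {X Y : P} (hX : X ∈ ({A, B, D, E} : Set P))
    (hY : Y ∈ ({A, B, D, E} : Set P)) (hXY : X ≠ Y) : ¬Collinear ℝ ({X, C, Y} : Set P) :=
  not_collinear_of_notMem_affineSpan_pair
    (fun hC => h.not_collinear <| by
      simpa only [Set.insert_comm C, Set.pair_comm B C] using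
        collinear_insert_of_mem_affineSpan_pair hC)
    (h.mem_line hX) (h.mem_line hY) hXY

end Affine

variable {A B C D E : Pt} {α β γ : ℝ} (h : TwoCevians A B C D E)
include h

lemma angle_apex_mem (X Y : Pt) (hXY : X ≠ Y) (hX : X ∈ ({A, B, D, E} : Set Pt) := by simp)
    (hY : Y ∈ ({A, B, D, E} : Set Pt) := by simp) : ∠ X C Y ∈ angleSet {A, B, C, D, E} :=
  have hsub : ({A, B, D, E} : Set Pt) ⊆ {A, B, C, D, E} :=
    Set.insert_subset_insert (Set.insert_subset_insert (Set.subset_insert C _))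
  angle_mem_angleSet (hsub hX) (by simp) (hsub hY) (h.not_collinear_apex hX hY hXY)

lemma angle_base_mem (X Y : Pt) (hXY : X ≠ Y) (hX : X ∈ ({A, B, D, E} : Set Pt) := by simp)
    (hY : Y ∈ ({A, B, D, E} : Set Pt) := by simp) : ∠ C X Y ∈ angleSet {A, B, C, D, E} := by
  have hsub : ({A, B, D, E} : Set Pt) ⊆ {A, B, C, D, E} :=
    Set.insert_subset_insert (Set.insert_subset_insert (Set.subset_insert C _))
  refine angle_mem_angleSet (by simp) (hsub hX) (hsub hY) ?_
  rw [Set.insert_comm]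
  exact h.not_collinear_apex hX hY hXY

variable (hval : ∀ θ ∈ angleSet {A, B, C, D, E}, θ = α ∨ θ = β ∨ θ = γ) (hαβ : α < β)
  (hβγ : β < γ)
include hval hαβ hβγ

lemma apex_angles : ∠ A C D = α ∧ ∠ A C E = β ∧ ∠ A C B = γ := by
  have hDCE_pos := (h.angle_apex_mem D E h.sbtw_ADE.ne_right).1.1
  have hECB_pos := (h.angle_apex_mem E B h.sbtw_DEB.ne_right).1.1
  have hDCE := angle_add_angle_eq_of_sbtw (p := C) h.sbtw_ADE
  have hECB := angle_add_angle_eq_of_sbtw (p := C) h.sbtw_AEB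
  rcases hval _ (h.angle_apex_mem A D h.sbtw_ADE.left_ne) with hp | hp | hp <;>
  rcases hval _ (h.angle_apex_mem A E h.sbtw_AEB.left_ne) with hq | hq | hq <;>
  rcases hval _ (h.angle_apex_mem A B h.sbtw_ADB.left_ne_right)
    with hr | hr | hr <;>
  exact ⟨by linarith, by linarith, by linarith⟩

lemma two_mul_and_three_mul : β = 2 * α ∧ γ = 3 * α := by
  obtain ⟨hACD, hACE, hACB⟩ := h.apex_angles hval hαβ hβγ
  have hα : 0 < α := hACD ▸ (h.angle_apex_mem A D h.sbtw_ADE.left_ne).1.1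
  have hDCE := angle_add_angle_eq_of_sbtw (p := C) h.sbtw_ADE
  have hDCB := angle_add_angle_eq_of_sbtw (p := C) h.sbtw_ADB
  have hβ : β = 2 * α := by
    rcases hval _ (h.angle_apex_mem D E h.sbtw_ADE.ne_right)
      with hm | hm | hm <;> linarith
  refine ⟨hβ, ?_⟩
  rcases hval _ (h.angle_apex_mem D B h.sbtw_DEB.left_ne_right)
    with hn | hn | hn <;> linarith

lemma base_angles : ∠ C A B = α ∧ ∠ C B A = α := by
  obtain ⟨hACD, hACE, hACB⟩ := h.apex_angles hval hαβ hβγ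
  obtain ⟨hβ, hγ⟩ := h.two_mul_and_three_mul hval hαβ hβγ
  have hDCB := angle_add_angle_eq_of_sbtw (p := C) h.sbtw_ADB
  have hCEB := exterior_angle_eq_angle_add_angle (p₃ := C) B h.sbtw_AEB.symm
  have hCDA := exterior_angle_eq_angle_add_angle (p₃ := C) A h.sbtw_ADB
  rw [angle_comm E C A, h.sbtw_AEB.angle_eq_right C] at hCEB
  rw [h.sbtw_ADB.symm.angle_eq_right C] at hCDA
  have hCAB_pos := (h.angle_base_mem A B h.sbtw_ADB.left_ne_right).1.1
  have hCBA_pos := (h.angle_base_mem B A h.sbtw_ADB.left_ne_right.symm).1.1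
  constructor
  · rcases hval _ (h.angle_base_mem E B h.sbtw_DEB.ne_right)
      with hv | hv | hv <;> linarith
  · rcases hval _ (h.angle_base_mem D A h.sbtw_ADE.ne_left)
      with hu | hu | hu <;> linarith

end TwoCevians

theorem stmt10_general (A B C D E : Pt) (α β γ : ℝ)
    (hC : ¬ Collinear ℝ ({A, B, C} : Set Pt))
    (hD : D ∈ openSegment ℝ A E) (hE : E ∈ openSegment ℝ D B)
    (hord1 : α < β) (hord2 : β < γ)
    (hset : angleSet {A, B, C, D, E} = {α, β, γ}) :
    β = 2 * α ∧ γ = 3 * α ∧ α = Real.pi / 5 := by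
  have h := TwoCevians.of_mem_openSegment hC hD hE
  have hval : ∀ θ ∈ angleSet {A, B, C, D, E}, θ = α ∨ θ = β ∨ θ = γ := fun θ hθ => by
    simpa [hset] using hθ
  obtain ⟨-, -, hACB⟩ := h.apex_angles hval hord1 hord2
  obtain ⟨hβ, hγ⟩ := h.two_mul_and_three_mul hval hord1 hord2
  obtain ⟨hCAB, hCBA⟩ := h.base_angles hval hord1 hord2
  have hsum := angle_add_angle_add_angle_eq_pi B (ne₁₃_of_not_collinear hC).symm
  rw [angle_comm B A C] at hsum
  exact ⟨hβ, hγ, by linarith⟩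

theorem stmt10 (A B C D E : Pt) (α β γ : ℝ)
    (hAB : A ≠ B) (hC : ¬ Collinear ℝ ({A, B, C} : Set Pt))
    (hD : D ∈ openSegment ℝ A E) (hE : E ∈ openSegment ℝ D B)
    (hord1 : α < β) (hord2 : β < γ)
    (hα : α ∈ Set.Ioo 0 Real.pi) (hγ : γ ∈ Set.Ioo 0 Real.pi)
    (hset : angleSet {A, B, C, D, E} = {α, β, γ}) :
    β = 2 * α ∧ γ = 3 * α ∧ α = Real.pi / 5 :=
  stmt10_general A B C D E α β γ hC hD hE hord1 hord2 hset
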